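/- For any SRLK steady-state branch, the kinase concentration z(L) converges to a finite limit c_z as L → +∞, and c_z > 0. -/

import Mathlib

/-! SRLK model with `n+1` trans-membrane chains `X_1, …, X_{n+1}` (indexed by
`Fin (n+1)`, so the paper's "`n ≥ 1` chains" corresponds to `n+1` here), an extrinsic
kinase `Z` with affinity `K0`, signalling affinities `K i`, dummy affinities `K' i`,
and total copy numbers `Nz` and `N i`. -/

/-- The signalling function `σ = K0·z·L·Π_j (K_j·x_j)`. -/
def srlkSigma (n : ℕ) (K0 : ℝ) (K : Fin (n+1) → ℝ) (z L : ℝ)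
    (x : Fin (n+1) → ℝ) : ℝ :=
  K0 * z * L * ∏ j, (K j * x j)

/-- The dummy function `δ = L·Π_j (K'_j·x_j)`. -/
def srlkDelta (n : ℕ) (K' : Fin (n+1) → ℝ) (L : ℝ) (x : Fin (n+1) → ℝ) : ℝ :=
  L * ∏ j, (K' j * x j)

/-- The SRLK steady-state equations at ligand concentration `L`. -/
def srlkSteady (n : ℕ) (K0 : ℝ) (K K' : Fin (n+1) → ℝ) (Nz : ℝ)
    (N : Fin (n+1) → ℝ) (L z : ℝ) (x : Fin (n+1) → ℝ) : Prop :=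
  Nz = z + K0 * z * (x 0 + ∑ j ∈ Finset.Ioi (0 : Fin (n+1)),
      (∏ l ∈ Finset.Iio j, (K l * x l)) * x j) + srlkSigma n K0 K z L x ∧
  N 0 = x 0 + (∑ j ∈ Finset.Ioi (0 : Fin (n+1)),
        (∏ l ∈ Finset.Iio j, (K' l * x l)) * x j)
      + srlkDelta n K' L x
      + K0 * z * (x 0 + ∑ j ∈ Finset.Ioi (0 : Fin (n+1)),
        (∏ l ∈ Finset.Iio j, (K l * x l)) * x j)
      + srlkSigma n K0 K z L x ∧
  ∀ i : Fin (n+1), 0 < i →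
    N i = x i + (∑ j ∈ Finset.Ici i,
        ((∏ l ∈ Finset.Iio j, (K' l * x l)) * x j
          + K0 * z * (∏ l ∈ Finset.Iio j, (K l * x l)) * x j))
      + srlkDelta n K' L x + srlkSigma n K0 K z L x

/-- `f` is an algebraic function on `(0, ∞)`: it satisfies a monic polynomial equation
whose coefficients are rational functions with denominators nowhere vanishing on
`(0, ∞)`. -/
def AlgebraicOnIoi (f : ℝ → ℝ) : Prop :=
  ∃ m : ℕ, 1 ≤ m ∧ ∃ p q : Fin m → Polynomial ℝ,
    (∀ i : Fin m, ∀ L : ℝ, 0 < L → (q i).eval L ≠ 0) ∧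
    ∀ L : ℝ, 0 < L →
      f L ^ m + ∑ i : Fin m, ((p i).eval L / (q i).eval L) * f L ^ (i : ℕ) = 0

/-- An SRLK steady-state branch: continuous positive functions `z, x_1, …, x_{n+1}` on
`(0, ∞)` satisfying the SRLK steady-state equations for every `L > 0`, with
`z`, each `x_i`, `σ` and `δ` bounded and algebraic on `(0, ∞)`. -/
structure SRLKBranch (n : ℕ) (K0 : ℝ) (K K' : Fin (n+1) → ℝ) (Nz : ℝ)
    (N : Fin (n+1) → ℝ) (z : ℝ → ℝ) (x : Fin (n+1) → ℝ → ℝ) : Prop where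
  contZ : ContinuousOn z (Set.Ioi 0)
  contX : ∀ i, ContinuousOn (x i) (Set.Ioi 0)
  posZ : ∀ L : ℝ, 0 < L → 0 < z L
  posX : ∀ i, ∀ L : ℝ, 0 < L → 0 < x i L
  steady : ∀ L : ℝ, 0 < L → srlkSteady n K0 K K' Nz N L (z L) (fun i => x i L)
  bddZ : ∃ C : ℝ, ∀ L : ℝ, 0 < L → |z L| ≤ C
  bddX : ∀ i, ∃ C : ℝ, ∀ L : ℝ, 0 < L → |x i L| ≤ C
  bddSigma : ∃ C : ℝ, ∀ L : ℝ, 0 < L →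
    |srlkSigma n K0 K (z L) L (fun i => x i L)| ≤ C
  bddDelta : ∃ C : ℝ, ∀ L : ℝ, 0 < L → |srlkDelta n K' L (fun i => x i L)| ≤ C
  algZ : AlgebraicOnIoi z
  algX : ∀ i, AlgebraicOnIoi (x i)
  algSigma : AlgebraicOnIoi (fun L => srlkSigma n K0 K (z L) L (fun i => x i L))
  algDelta : AlgebraicOnIoi (fun L => srlkDelta n K' L (fun i => x i L))

/-! The kinase concentration `z` is a bounded algebraic function, so after clearing denominators
`P (L, z L) = 0` for a nonzero bivariate polynomial `P`. Dividing by the top power of `L`, the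
coefficient `p` of that power, a nonzero polynomial, satisfies `p (z L) → 0`: every cluster point
of `z` at `+∞` is one of the finitely many roots of `p`. By the intermediate value theorem the
cluster set of a continuous function is an interval, so it is a single point and `z` converges.

The limit is positive because the steady state forces `Nz ∏ K' ≤ C z` for a constant `C`: the
kinase outside the full signalling complex is `z (1 + K0 S)` with `S` bounded, while the complex
itself satisfies `σ ∏ K' = δ K0 z ∏ K ≤ N 0 K0 z ∏ K`. -/

open Filter Polynomial Set Topology

section ClusterPoints

variable {α : Type*} [ConditionallyCompleteLinearOrder α] [TopologicalSpace α] [OrderTopology α]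
  [DenselyOrdered α]

theorem frequently_atTop_eq_of_frequently_lt_of_frequently_gt {f : α → ℝ} {a : α} {y : ℝ}
    (hf : ContinuousOn f (Ici a)) (hlt : ∃ᶠ t in atTop, f t < y)
    (hgt : ∃ᶠ t in atTop, y < f t) : ∃ᶠ t in atTop, f t = y := by
  refine frequently_atTop.2 fun M => ?_
  obtain ⟨t₁, ht₁, hy₁⟩ := frequently_atTop.1 hlt (max M a)
  obtain ⟨t₂, ht₂, hy₂⟩ := frequently_atTop.1 hgt (max M a)
  have hmin : max M a ≤ min t₁ t₂ := le_min ht₁ ht₂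
  have hsub : uIcc t₁ t₂ ⊆ Ici a := fun t ht => (le_max_right M a).trans (hmin.trans ht.1)
  obtain ⟨t, ht, hft⟩ := intermediate_value_uIcc (hf.mono hsub) (mem_uIcc_of_le hy₁.le hy₂.le)
  exact ⟨t, (le_max_left M a).trans (hmin.trans ht.1), hft⟩

theorem mapClusterPt_atTop_of_mem_Ioo {f : α → ℝ} {a : α} {b c y : ℝ}
    (hf : ContinuousOn f (Ici a)) (hb : MapClusterPt b atTop f) (hc : MapClusterPt c atTop f)
    (hy : y ∈ Ioo b c) : MapClusterPt y atTop f := by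
  have hfreq := frequently_atTop_eq_of_frequently_lt_of_frequently_gt hf
    (hb.frequently (eventually_lt_nhds hy.1)) (hc.frequently (eventually_gt_nhds hy.2))
  exact mapClusterPt_iff_frequently.2 fun s hs => hfreq.mono fun t ht => ht ▸ mem_of_mem_nhds hs

theorem exists_tendsto_atTop_of_finite_mapClusterPt {f : α → ℝ} {a : α} {K : Set ℝ}
    (hf : ContinuousOn f (Ici a)) (hK : IsCompact K) (hfK : ∀ᶠ t in atTop, f t ∈ K)
    (hfin : {y | MapClusterPt y atTop f}.Finite) : ∃ c, Tendsto f atTop (𝓝 c) := by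
  have : Nonempty α := ⟨a⟩
  obtain ⟨c, -, hc⟩ := hK.exists_mapClusterPt (le_principal_iff.2 hfK)
  have hnot_lt : ∀ b d, MapClusterPt b atTop f → MapClusterPt d atTop f → b < d → False :=
    fun b d hb hd hbd => (Ioo_infinite hbd).mono
      (fun y hy => mapClusterPt_atTop_of_mem_Ioo hf hb hd hy) hfin
  refine ⟨c, hK.tendsto_nhds_of_unique_mapClusterPt hfK fun y _ hy => ?_⟩
  rcases lt_trichotomy y c with h | h | h
  exacts [(hnot_lt y c hy hc h).elim, h, (hnot_lt c y hc hy h).elim]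

end ClusterPoints

theorem MapClusterPt.eq_of_tendsto_comp {X Y ι : Type*} [TopologicalSpace X] [TopologicalSpace Y]
    [T2Space Y] {l : Filter ι} {f : ι → X} {g : X → Y} {x : X} {y : Y}
    (hx : MapClusterPt x l f) (hg : ContinuousAt g x) (hgf : Tendsto (g ∘ f) l (𝓝 y)) :
    g x = y :=
  eq_of_nhds_neBot ((hx.tendsto_comp hg).clusterPt.mono hgf)

theorem Polynomial.evalEval_eq_sum_range (Q : ℝ[X][X]) (y L : ℝ) :
    Q.evalEval y L = ∑ j ∈ Finset.range (Q.natDegree + 1), (Q.coeff j).eval y * L ^ j := by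
  simp [evalEval, eval_eq_sum_range (p := Q), eval_finsetSum]

theorem Polynomial.tendsto_eval_leadingCoeff_of_evalEval_eq_zero {Q : ℝ[X][X]} {g : ℝ → ℝ}
    {K : Set ℝ} (hK : IsCompact K) (hgK : ∀ᶠ L in atTop, g L ∈ K)
    (hQ : ∀ᶠ L in atTop, Q.evalEval (g L) L = 0) :
    Tendsto (fun L => Q.leadingCoeff.eval (g L)) atTop (𝓝 0) := by
  have hbdd : ∀ j, IsBoundedUnder (· ≤ ·) atTop (norm ∘ fun L => (Q.coeff j).eval (g L)) := by
    intro j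
    obtain ⟨C, hC⟩ := hK.exists_bound_of_continuousOn (Q.coeff j).continuous.continuousOn
    exact isBoundedUnder_of_eventually_le (a := C) (hgK.mono fun L hL => hC _ hL)
  have hlow : Tendsto (fun L => -∑ j ∈ Finset.range Q.natDegree,
      (Q.coeff j).eval (g L) * (L ^ j / L ^ Q.natDegree)) atTop (𝓝 0) := by
    simpa only [Finset.sum_const_zero, neg_zero] using (tendsto_finsetSum _ fun j hj =>
      isBoundedUnder_le_mul_tendsto_zero (hbdd j)
        (tendsto_pow_div_pow_atTop_zero (Finset.mem_range.1 hj))).neg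
  refine hlow.congr' ?_
  filter_upwards [hQ, eventually_gt_atTop 0] with L hL hLpos
  rw [evalEval_eq_sum_range, Finset.sum_range_succ, coeff_natDegree] at hL
  have hLd : L ^ Q.natDegree ≠ 0 := pow_ne_zero _ hLpos.ne'
  have : Q.leadingCoeff.eval (g L) * L ^ Q.natDegree = -∑ j ∈ Finset.range Q.natDegree,
      (Q.coeff j).eval (g L) * L ^ j := by linarith
  rw [Finset.sum_congr rfl fun j _ => (mul_div_assoc _ _ _).symm, ← Finset.sum_div, ← neg_div,
    ← this, mul_div_cancel_right₀ _ hLd]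

theorem AlgebraicOnIoi.exists_evalEval_eq_zero {f : ℝ → ℝ} (hf : AlgebraicOnIoi f) :
    ∃ P : ℝ[X][X], P ≠ 0 ∧ ∀ L : ℝ, 0 < L → P.evalEval L (f L) = 0 := by
  obtain ⟨m, -, p, q, hq, hfpq⟩ := hf
  -- clear the denominators `q i` by multiplying through with their product
  set Q : ℝ[X] := ∏ j, q j
  refine ⟨C Q * X ^ m + ∑ i : Fin m, C (p i * ∏ j ∈ Finset.univ.erase i, q j) * X ^ (i : ℕ),
    fun hP => ?_, fun L hL => ?_⟩
  · have hQ : Q.eval 1 ≠ 0 := by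
      simpa only [Q, eval_prod] using Finset.prod_ne_zero_iff.2 fun i _ => hq i 1 one_pos
    have hcoeff := congr_arg (coeff · m) hP
    simp only [coeff_add, coeff_C_mul_X_pow, if_true, coeff_zero,
      coeff_eq_zero_of_degree_lt (degree_sum_fin_lt _), add_zero] at hcoeff
    simp [hcoeff] at hQ
  · have hqL : ∀ i, (q i).eval L ≠ 0 := fun i => hq i L hL
    calc _ = Q.eval L *
          (f L ^ m + ∑ i : Fin m, ((p i).eval L / (q i).eval L) * f L ^ (i : ℕ)) := by
          simp only [evalEval_add, evalEval_finsetSum, evalEval_mul, evalEval_C, evalEval_pow,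
            evalEval_X, mul_add, Finset.mul_sum, Q, eval_prod]
          congr 1
          refine Finset.sum_congr rfl fun i _ => ?_
          rw [← Finset.mul_prod_erase _ _ (Finset.mem_univ i), eval_mul, eval_prod]
          field_simp [hqL i]
      _ = 0 := by rw [hfpq L hL, mul_zero]

theorem AlgebraicOnIoi.exists_tendsto_atTop {f : ℝ → ℝ} (hf : AlgebraicOnIoi f)
    (hcont : ContinuousOn f (Ioi 0)) (hbdd : ∃ C, ∀ L : ℝ, 0 < L → |f L| ≤ C) :
    ∃ c, Tendsto f atTop (𝓝 c) := by
  obtain ⟨C, hC⟩ := hbdd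
  have hfK : ∀ᶠ L in atTop, f L ∈ Icc (-C) C :=
    (eventually_gt_atTop 0).mono fun L hL => abs_le.1 (hC L hL)
  obtain ⟨P, hP, hPf⟩ := hf.exists_evalEval_eq_zero
  -- read `P` as a polynomial in `L` whose coefficients are polynomials in `f L`
  set Q := Bivariate.swap P
  have hQ : Q.leadingCoeff ≠ 0 := leadingCoeff_ne_zero.2 (by simpa [Q] using hP)
  have hQf : ∀ᶠ L in atTop, Q.evalEval (f L) L = 0 := by
    filter_upwards [eventually_gt_atTop 0] with L hL
    rw [← coe_aevalAeval_eq_evalEval, Bivariate.aevalAeval_swap, coe_aevalAeval_eq_evalEval]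
    exact hPf L hL
  have hlim := tendsto_eval_leadingCoeff_of_evalEval_eq_zero isCompact_Icc hfK hQf
  refine exists_tendsto_atTop_of_finite_mapClusterPt (hcont.mono (Ici_subset_Ioi.2 one_pos))
    isCompact_Icc hfK ((finite_setOfPred_isRoot hQ).subset fun y hy => ?_)
  exact hy.eq_of_tendsto_comp (g := fun y => Q.leadingCoeff.eval y)
    Q.leadingCoeff.continuous.continuousAt hlim

/-- The first SRLK equation reads `Nz = z + K0 * z * srlkChainSum n K x + σ`. -/
def srlkChainSum (n : ℕ) (K x : Fin (n+1) → ℝ) : ℝ :=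
  x 0 + ∑ j ∈ Finset.Ioi (0 : Fin (n+1)), (∏ l ∈ Finset.Iio j, (K l * x l)) * x j

section SteadyState

variable {n : ℕ} {K0 : ℝ} {K K' : Fin (n+1) → ℝ} {Nz : ℝ} {N : Fin (n+1) → ℝ} {L z : ℝ}
  {x : Fin (n+1) → ℝ}

theorem srlkChainSum_nonneg (hK : ∀ i, 0 ≤ K i) (hx : ∀ i, 0 ≤ x i) :
    0 ≤ srlkChainSum n K x :=
  add_nonneg (hx 0) (Finset.sum_nonneg fun j _ =>
    mul_nonneg (Finset.prod_nonneg fun l _ => mul_nonneg (hK l) (hx l)) (hx j))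

theorem srlkChainSum_le_srlkChainSum {y : Fin (n+1) → ℝ} (hK : ∀ i, 0 ≤ K i)
    (hx : ∀ i, 0 ≤ x i) (hxy : ∀ i, x i ≤ y i) : srlkChainSum n K x ≤ srlkChainSum n K y := by
  unfold srlkChainSum
  have hy : ∀ i, 0 ≤ y i := fun i => (hx i).trans (hxy i)
  gcongr with j _ l _ <;> first
    | exact hxy _ | exact hx _ | exact hK _
    | exact fun l _ => mul_nonneg (hK l) (hx l)
    | exact Finset.prod_nonneg fun l _ => mul_nonneg (hK l) (hy l)

theorem srlkDelta_mul_eq :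
    srlkDelta n K' L x * (K0 * z * ∏ j, K j) = srlkSigma n K0 K z L x * ∏ j, K' j := by
  simp only [srlkDelta, srlkSigma, Finset.prod_mul_distrib]
  ring

theorem srlkSigma_nonneg (hK0 : 0 ≤ K0) (hK : ∀ i, 0 ≤ K i) (hz : 0 ≤ z) (hL : 0 ≤ L)
    (hx : ∀ i, 0 ≤ x i) : 0 ≤ srlkSigma n K0 K z L x :=
  mul_nonneg (by positivity) (Finset.prod_nonneg fun j _ => mul_nonneg (hK j) (hx j))

theorem srlkSteady.nz_pos (h : srlkSteady n K0 K K' Nz N L z x) (hK0 : 0 ≤ K0)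
    (hK : ∀ i, 0 ≤ K i) (hz : 0 < z) (hL : 0 ≤ L) (hx : ∀ i, 0 ≤ x i) : 0 < Nz := by
  have hS := srlkChainSum_nonneg hK hx
  have hσ := srlkSigma_nonneg hK0 hK hz.le hL hx
  rw [h.1]
  unfold srlkChainSum at hS
  positivity

theorem srlkSteady.srlkDelta_le (h : srlkSteady n K0 K K' Nz N L z x) (hK0 : 0 ≤ K0)
    (hK : ∀ i, 0 ≤ K i) (hK' : ∀ i, 0 ≤ K' i) (hz : 0 ≤ z) (hL : 0 ≤ L) (hx : ∀ i, 0 ≤ x i) :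
    srlkDelta n K' L x ≤ N 0 := by
  have hS := srlkChainSum_nonneg hK hx
  have hS' := srlkChainSum_nonneg hK' hx
  have hσ := srlkSigma_nonneg hK0 hK hz hL hx
  unfold srlkChainSum at hS hS'
  rw [h.2.1]
  linarith [mul_nonneg (mul_nonneg hK0 hz) hS]

theorem srlkSteady.mul_prod_le (h : srlkSteady n K0 K K' Nz N L z x) (hK0 : 0 ≤ K0)
    (hK : ∀ i, 0 ≤ K i) (hK' : ∀ i, 0 ≤ K' i) (hz : 0 ≤ z) (hL : 0 ≤ L) (hx : ∀ i, 0 ≤ x i)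
    {B : Fin (n+1) → ℝ} (hxB : ∀ i, x i ≤ B i) :
    Nz * ∏ j, K' j ≤
      z * ((1 + K0 * srlkChainSum n K B) * ∏ j, K' j + N 0 * (K0 * ∏ j, K j)) := by
  have hδ := h.srlkDelta_le hK0 hK hK' hz hL hx
  have hSB := srlkChainSum_le_srlkChainSum hK hx hxB
  have hK'prod : 0 ≤ ∏ j, K' j := Finset.prod_nonneg fun j _ => hK' j
  have hKprod : 0 ≤ ∏ j, K j := Finset.prod_nonneg fun j _ => hK j
  calc Nz * ∏ j, K' j
      = z * (1 + K0 * srlkChainSum n K x) * ∏ j, K' j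
        + srlkDelta n K' L x * (K0 * z * ∏ j, K j) := by
        rw [srlkDelta_mul_eq, h.1, srlkChainSum]; ring
    _ ≤ z * (1 + K0 * srlkChainSum n K B) * ∏ j, K' j + N 0 * (K0 * z * ∏ j, K j) := by
        gcongr
    _ = _ := by ring

end SteadyState

theorem SRLKBranch.exists_pos_le {n : ℕ} {K0 : ℝ} {K K' : Fin (n+1) → ℝ} {Nz : ℝ}
    {N : Fin (n+1) → ℝ} {z : ℝ → ℝ} {x : Fin (n+1) → ℝ → ℝ}
    (hbr : SRLKBranch n K0 K K' Nz N z x) (hK0 : 0 ≤ K0) (hK : ∀ i, 0 ≤ K i)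
    (hK' : ∀ i, 0 < K' i) : ∃ c, 0 < c ∧ ∀ L : ℝ, 0 < L → c ≤ z L := by
  choose B hB using hbr.bddX
  set C := (1 + K0 * srlkChainSum n K B) * ∏ j, K' j + N 0 * (K0 * ∏ j, K j)
  have hbound : ∀ L : ℝ, 0 < L → Nz * ∏ j, K' j ≤ z L * C := fun L hL =>
    (hbr.steady L hL).mul_prod_le hK0 hK (fun i => (hK' i).le) (hbr.posZ L hL).le hL.le
      (fun i => (hbr.posX i L hL).le) fun i => le_of_abs_le (hB i L hL)
  have hnum : 0 < Nz * ∏ j, K' j :=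
    mul_pos ((hbr.steady 1 one_pos).nz_pos hK0 hK (hbr.posZ 1 one_pos) zero_le_one
      fun i => (hbr.posX i 1 one_pos).le) (Finset.prod_pos fun j _ => hK' j)
  have hC : 0 < C :=
    pos_of_mul_pos_right (hnum.trans_le (hbound 1 one_pos)) (hbr.posZ 1 one_pos).le
  exact ⟨Nz * (∏ j, K' j) / C, div_pos hnum hC, fun L hL => (div_le_iff₀ hC).2 (hbound L hL)⟩

theorem srlk_kinase_positive_limit_general
    (n : ℕ) (K0 : ℝ) (K K' : Fin (n+1) → ℝ) (Nz : ℝ) (N : Fin (n+1) → ℝ)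
    (hK0 : 0 < K0) (hK : ∀ i, 0 < K i) (hK' : ∀ i, 0 < K' i)
    (z : ℝ → ℝ) (x : Fin (n+1) → ℝ → ℝ)
    (hbr : SRLKBranch n K0 K K' Nz N z x) :
    ∃ cz : ℝ, 0 < cz ∧ Filter.Tendsto z Filter.atTop (nhds cz) := by
  obtain ⟨cz, hcz⟩ := hbr.algZ.exists_tendsto_atTop hbr.contZ hbr.bddZ
  obtain ⟨c, hc, hcz_le⟩ := hbr.exists_pos_le hK0.le (fun i => (hK i).le) hK'
  exact ⟨cz, hc.trans_le (ge_of_tendsto hcz ((eventually_gt_atTop 0).mono hcz_le)), hcz⟩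

/-- along any SRLK steady-state branch, the kinase concentration `z`
converges to a finite, strictly positive limit as `L → +∞`. -/
theorem srlk_kinase_positive_limit
    (n : ℕ) (K0 : ℝ) (K K' : Fin (n+1) → ℝ) (Nz : ℝ) (N : Fin (n+1) → ℝ)
    (hK0 : 0 < K0) (hK : ∀ i, 0 < K i) (hK' : ∀ i, 0 < K' i)
    (hNz : 0 < Nz) (hN : ∀ i, 0 < N i)
    (z : ℝ → ℝ) (x : Fin (n+1) → ℝ → ℝ)
    (hbr : SRLKBranch n K0 K K' Nz N z x) :
    ∃ cz : ℝ, 0 < cz ∧ Filter.Tendsto z Filter.atTop (nhds cz) :=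
  srlk_kinase_positive_limit_general n K0 K K' Nz N hK0 hK hK' z x hbr
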